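/- arXiv:0802.1360 — 2 statements merged into one kernel-verified Lean document; each statement's English description precedes it below -/
import Mathlib

section
/- Let Φ: M_{d_A} → M_{d_B} be a degradable CPT map (i.e., there exists a CPT map Ψ with Ψ∘Φ = Φ^C, where Φ^C is the complementary channel). If there exists a pure state |ψ⟩ such that Φ(|ψ⟩⟨ψ|) has rank d_B (full rank), then the minimal environment dimension (Choi rank) d_E of Φ equals d_B. -/
open Matrix Kronecker BigOperators ComplexOrder

noncomputable def krausMap {n m ι : Type*} [Fintype n] [Fintype ι]
    (A : ι → Matrix m n ℂ) : Matrix n n ℂ →ₗ[ℂ] Matrix m m ℂ where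
  toFun ρ := ∑ k, A k * ρ * (A k)ᴴ
  map_add' ρ σ := by
    simp [Matrix.mul_add, Matrix.add_mul, Finset.sum_add_distrib]
  map_smul' c ρ := by
    simp [Matrix.mul_smul, Matrix.smul_mul, Finset.smul_sum]

noncomputable def complementMap {n m ι : Type*} [Fintype n] [Fintype m] [Fintype ι]
    (A : ι → Matrix m n ℂ) : Matrix n n ℂ →ₗ[ℂ] Matrix ι ι ℂ where
  toFun ρ := Matrix.of fun j k => (A j * ρ * (A k)ᴴ).trace
  map_add' ρ σ := by
    ext j k
    simp [Matrix.mul_add, Matrix.add_mul]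
  map_smul' c ρ := by
    ext j k
    simp [Matrix.mul_smul, Matrix.smul_mul]

noncomputable def choi {n m : Type*} [Fintype n] [DecidableEq n]
    (Φ : Matrix n n ℂ →ₗ[ℂ] Matrix m m ℂ) : Matrix (n × m) (n × m) ℂ :=
  Matrix.of fun p q => Φ (Matrix.single p.1 q.1 1) p.2 q.2

def IsCPTP {n m : Type*} [Fintype n] [DecidableEq n] [Fintype m]
    (Φ : Matrix n n ℂ →ₗ[ℂ] Matrix m m ℂ) : Prop :=
  (choi Φ).PosSemidef ∧ ∀ ρ, (Φ ρ).trace = ρ.trace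

def IsKrausRep {n m ι : Type*} [Fintype n] [DecidableEq n] [Fintype m] [Fintype ι]
    (A : ι → Matrix m n ℂ) (Φ : Matrix n n ℂ →ₗ[ℂ] Matrix m m ℂ) : Prop :=
  (∀ ρ, Φ ρ = ∑ k, A k * ρ * (A k)ᴴ) ∧ ∑ k, (A k)ᴴ * A k = 1

def Degradable {n m : Type*} [Fintype n] [DecidableEq n] [Fintype m] [DecidableEq m]
    (Φ : Matrix n n ℂ →ₗ[ℂ] Matrix m m ℂ) : Prop :=
  ∃ (e : ℕ) (A : Fin e → Matrix m n ℂ), IsKrausRep A Φ ∧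
    ∃ Ψ : Matrix m m ℂ →ₗ[ℂ] Matrix (Fin e) (Fin e) ℂ,
      IsCPTP Ψ ∧ Ψ ∘ₗ Φ = complementMap A

def AntiDegradable {n m : Type*} [Fintype n] [DecidableEq n] [Fintype m] [DecidableEq m]
    (Φ : Matrix n n ℂ →ₗ[ℂ] Matrix m m ℂ) : Prop :=
  ∃ (e : ℕ) (A : Fin e → Matrix m n ℂ), IsKrausRep A Φ ∧
    ∃ Λ : Matrix (Fin e) (Fin e) ℂ →ₗ[ℂ] Matrix m m ℂ,
      IsCPTP Λ ∧ Λ ∘ₗ complementMap A = Φ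

/-! The Choi matrix of a Kraus map `ρ ↦ ∑ₖ Aₖ ρ Aₖᴴ` is `Nᴴ N`, where the rows of `N` are the
conjugated vectorised Kraus operators, while the complementary map sends `1` to `(N Nᴴ)ᵀ`; so the
Choi rank is the rank of `Φᶜ(1)`. Degradability writes `Φᶜ = Ψ ∘ Φ` with `Ψ` completely positive,
hence itself a Kraus map `X ↦ ∑ₗ Bₗ X Bₗᴴ`. If `P = Φ(ψψᴴ)` has full rank it is positive definite,
so `Ψ(P) v = 0` forces `Bₗᴴ v = 0` for every `l`, and then `Ψ(X) v = 0` for every `X`. Hence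
`rank Φᶜ(1) ≤ rank Ψ(P) = rank Φᶜ(ψψᴴ) ≤ d_B`, the last because `Φᶜ(ψψᴴ)` factors through
`ℂ^{d_B}`. Conversely `Φ(ψψᴴ)` is a compression of the Choi matrix, so `d_B` is at most the
Choi rank. -/

namespace Matrix

lemma rank_le_rank_of_ker_le {K l m n : Type*} [Field K] [Fintype n]
    (X : Matrix l n K) (Y : Matrix m n K)
    (h : LinearMap.ker Y.mulVecLin ≤ LinearMap.ker X.mulVecLin) : X.rank ≤ Y.rank := by
  have hX := LinearMap.finrank_range_add_finrank_ker X.mulVecLin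
  have hY := LinearMap.finrank_range_add_finrank_ker Y.mulVecLin
  have := Submodule.finrank_mono h
  unfold rank
  omega

lemma isUnit_of_rank_eq_card {K n : Type*} [Field K] [Fintype n] [DecidableEq n]
    {A : Matrix n n K} (h : A.rank = Fintype.card n) : IsUnit A := by
  have hrange : LinearMap.range A.mulVecLin = ⊤ :=
    Submodule.eq_top_of_finrank_eq (h.trans (Module.finrank_fintype_fun_eq_card K).symm)
  rw [← mulVec_surjective_iff_isUnit, ← coe_mulVecLin]
  exact LinearMap.range_eq_top.mp hrange

lemma mulVec_eq_zero_of_sum_posSemidef {𝕜 ι n : Type*} [RCLike 𝕜] [Fintype n]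
    {P : ι → Matrix n n 𝕜} {s : Finset ι} (hP : ∀ i ∈ s, (P i).PosSemidef) {v : n → 𝕜}
    (hv : (∑ i ∈ s, P i) *ᵥ v = 0) {i : ι} (hi : i ∈ s) : P i *ᵥ v = 0 := by
  have hsum : ∑ j ∈ s, star v ⬝ᵥ P j *ᵥ v = 0 := by
    rw [← dotProduct_sum, ← sum_mulVec, hv, dotProduct_zero]
  have := (Finset.sum_eq_zero_iff_of_nonneg fun j hj => (hP j hj).dotProduct_mulVec_nonneg v).mp
    hsum i hi
  exact ((hP i hi).dotProduct_mulVec_zero_iff v).mp this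

end Matrix

section Choi

variable {n m : Type*} [Fintype n] [DecidableEq n]

lemma choi_injective :
    Function.Injective (choi : (Matrix n n ℂ →ₗ[ℂ] Matrix m m ℂ) → _) := by
  intro Φ Ψ h
  refine ext_linearMap ℂ fun i j => LinearMap.ext_ring ?_
  ext p q
  exact congr_fun (congr_fun h (i, p)) (j, q)

lemma map_vecMulVec_eq_choi [Fintype m] [DecidableEq m]
    (Φ : Matrix n n ℂ →ₗ[ℂ] Matrix m m ℂ) (u w : n → ℂ) :
    Φ (vecMulVec u w) =
      (of fun (p : n × m) r => if p.2 = r then u p.1 else 0)ᵀ * choi Φ *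
        of fun (q : n × m) s => if q.2 = s then w q.1 else 0 := by
  have hexpand : Φ (vecMulVec u w) = ∑ i, ∑ j, (u i * w j) • Φ (single i j 1) := by
    conv_lhs => rw [matrix_eq_sum_single (vecMulVec u w)]
    simp only [map_sum, vecMulVec_apply, ← map_smul, smul_single, smul_eq_mul, mul_one]
  ext r s
  simp only [hexpand, choi, Matrix.sum_apply, Matrix.smul_apply, smul_eq_mul, mul_assoc,
    mul_apply, transpose_apply, of_apply, ite_mul, zero_mul, Fintype.sum_prod_type,
    Finset.sum_ite_eq', Finset.mem_univ, if_true, mul_ite, Finset.sum_mul, mul_zero]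
  rw [Finset.sum_comm]
  simp only [mul_comm (Φ _ r s)]

lemma rank_map_vecMulVec_le_rank_choi [Fintype m] [DecidableEq m]
    (Φ : Matrix n n ℂ →ₗ[ℂ] Matrix m m ℂ) (u w : n → ℂ) :
    (Φ (vecMulVec u w)).rank ≤ (choi Φ).rank := by
  rw [map_vecMulVec_eq_choi]
  exact (rank_mul_le_left _ _).trans (rank_mul_le_right _ _)

end Choi

section Kraus

variable {n m ι : Type*}

def krausStack (A : ι → Matrix m n ℂ) : Matrix ι (n × m) ℂ :=
  of fun k p => star (A k p.2 p.1)

variable [Fintype n] [Fintype ι]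

lemma krausMap_apply (A : ι → Matrix m n ℂ) (ρ : Matrix n n ℂ) :
    krausMap A ρ = ∑ k, A k * ρ * (A k)ᴴ := rfl

lemma IsKrausRep.eq_krausMap [DecidableEq n] [Fintype m] {A : ι → Matrix m n ℂ}
    {Φ : Matrix n n ℂ →ₗ[ℂ] Matrix m m ℂ} (h : IsKrausRep A Φ) : Φ = krausMap A :=
  LinearMap.ext h.1

lemma posSemidef_krausMap [Fintype m] (A : ι → Matrix m n ℂ) {ρ : Matrix n n ℂ}
    (hρ : ρ.PosSemidef) : (krausMap A ρ).PosSemidef :=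
  posSemidef_sum _ fun k _ => hρ.mul_mul_conjTranspose_same (A k)

lemma choi_krausMap [DecidableEq n] (A : ι → Matrix m n ℂ) :
    choi (krausMap A) = (krausStack A)ᴴ * krausStack A := by
  ext p q
  simp [choi, krausMap_apply, krausStack, Matrix.sum_apply, mul_apply, single_apply, ite_and]

lemma complementMap_apply [Fintype m] (A : ι → Matrix m n ℂ) (ρ : Matrix n n ℂ) (j k : ι) :
    complementMap A ρ j k = (A j * ρ * (A k)ᴴ).trace := rfl

lemma complementMap_one [DecidableEq n] [Fintype m] (A : ι → Matrix m n ℂ) :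
    complementMap A 1 = (krausStack A * (krausStack A)ᴴ)ᵀ := by
  ext j k
  rw [complementMap_apply, Matrix.mul_one]
  simp only [krausStack, trace, diag_apply, transpose_apply, of_apply, mul_apply,
    conjTranspose_apply, star_star, Fintype.sum_prod_type]
  rw [Finset.sum_comm]
  simp only [mul_comm]

lemma rank_choi_krausMap [DecidableEq n] [Fintype m] (A : ι → Matrix m n ℂ) :
    (choi (krausMap A)).rank = (complementMap A 1).rank := by
  rw [choi_krausMap, complementMap_one, rank_transpose, rank_conjTranspose_mul_self,
    rank_self_mul_conjTranspose]

lemma exists_krausMap_eq_of_posSemidef_choi [DecidableEq n] [Fintype m]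
    {Ψ : Matrix n n ℂ →ₗ[ℂ] Matrix m m ℂ} (hΨ : (choi Ψ).PosSemidef) :
    ∃ B : n × m → Matrix m n ℂ, Ψ = krausMap B := by
  classical
  obtain ⟨R, hR⟩ := (by open scoped MatrixOrder in
    exact CStarAlgebra.nonneg_iff_eq_star_mul_self.mp hΨ.nonneg :
      ∃ R : Matrix (n × m) (n × m) ℂ, choi Ψ = Rᴴ * R)
  refine ⟨fun l => of fun p i => star (R l (i, p)), choi_injective ?_⟩
  have hstack : krausStack (fun l => of fun p i => star (R l (i, p))) = R := by
    ext l p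
    simp [krausStack]
  rw [choi_krausMap, hstack, hR]

lemma ker_krausMap_le_of_posDef [Fintype m] (B : ι → Matrix m n ℂ) {P : Matrix n n ℂ}
    (hP : P.PosDef) (W : Matrix n n ℂ) :
    LinearMap.ker (krausMap B P).mulVecLin ≤ LinearMap.ker (krausMap B W).mulVecLin := by
  intro v hv
  rw [LinearMap.mem_ker, mulVecLin_apply] at hv ⊢
  have hterm (l : ι) : (B l * P * (B l)ᴴ).PosSemidef :=
    hP.posSemidef.mul_mul_conjTranspose_same (B l)
  have hBv : ∀ l, (B l)ᴴ *ᵥ v = 0 := by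
    intro l
    have hl := mulVec_eq_zero_of_sum_posSemidef (fun k _ => hterm k) hv (Finset.mem_univ l)
    have hform : star ((B l)ᴴ *ᵥ v) ⬝ᵥ P *ᵥ ((B l)ᴴ *ᵥ v) = 0 := by
      rw [← (hterm l).dotProduct_mulVec_zero_iff] at hl
      rw [← hl, star_mulVec, conjTranspose_conjTranspose, ← dotProduct_mulVec, mulVec_mulVec,
        mulVec_mulVec]
    by_contra hne
    exact (hP.dotProduct_mulVec_pos hne).ne' hform
  rw [krausMap_apply, sum_mulVec]
  exact Finset.sum_eq_zero fun l _ => by rw [← mulVec_mulVec, hBv, mulVec_zero]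

lemma rank_krausMap_le_of_posDef [Fintype m] (B : ι → Matrix m n ℂ) {P : Matrix n n ℂ}
    (hP : P.PosDef) (W : Matrix n n ℂ) : (krausMap B W).rank ≤ (krausMap B P).rank :=
  rank_le_rank_of_ker_le _ _ (ker_krausMap_le_of_posDef B hP W)

lemma complementMap_vecMulVec [Fintype m] (A : ι → Matrix m n ℂ) (u w : n → ℂ) :
    complementMap A (vecMulVec u w) =
      (of fun j p => (A j *ᵥ u) p) * (of fun k p => (w ᵥ* (A k)ᴴ) p)ᵀ := by
  ext j k
  rw [complementMap_apply, mul_vecMulVec, vecMulVec_mul, trace_vecMulVec]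
  rfl

lemma rank_complementMap_vecMulVec_le [Fintype m] (A : ι → Matrix m n ℂ) (u w : n → ℂ) :
    (complementMap A (vecMulVec u w)).rank ≤ Fintype.card m := by
  rw [complementMap_vecMulVec]
  exact (rank_mul_le_left _ _).trans (rank_le_card_width _)

end Kraus

theorem degradable_fullRank_choiRank_general {a b : ℕ}
    (Φ : Matrix (Fin a) (Fin a) ℂ →ₗ[ℂ] Matrix (Fin b) (Fin b) ℂ)
    (hdeg : Degradable Φ)
    (hfull : ∃ ψ : Fin a → ℂ, star ψ ⬝ᵥ ψ = 1 ∧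
      (Φ (Matrix.vecMulVec ψ (star ψ))).rank = b) :
    (choi Φ).rank = b := by
  obtain ⟨ψ, -, hrank⟩ := hfull
  obtain ⟨e, A, hA, Ψ, hΨ, hcomp⟩ := hdeg
  obtain ⟨B, rfl⟩ := exists_krausMap_eq_of_posSemidef_choi hΨ.1
  obtain rfl := hA.eq_krausMap
  have hcomp_apply (ρ) : krausMap B (krausMap A ρ) = complementMap A ρ :=
    LinearMap.congr_fun hcomp ρ
  have hP : (krausMap A (vecMulVec ψ (star ψ))).PosDef :=
    (posSemidef_krausMap A (posSemidef_vecMulVec_self_star ψ)).posDef_iff_isUnit.mpr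
      (isUnit_of_rank_eq_card (by rw [hrank, Fintype.card_fin]))
  refine le_antisymm ?_ (hrank.ge.trans (rank_map_vecMulVec_le_rank_choi _ ψ (star ψ)))
  calc (choi (krausMap A)).rank = (krausMap B (krausMap A 1)).rank := by
        rw [rank_choi_krausMap, hcomp_apply]
    _ ≤ (krausMap B (krausMap A (vecMulVec ψ (star ψ)))).rank :=
        rank_krausMap_le_of_posDef B hP _
    _ ≤ b := by
        simpa [hcomp_apply] using rank_complementMap_vecMulVec_le A ψ (star ψ)

/-- a degradable channel having a pure input with full-rank output
has Choi rank equal to the output dimension. -/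
theorem degradable_fullRank_choiRank {a b : ℕ}
    (Φ : Matrix (Fin a) (Fin a) ℂ →ₗ[ℂ] Matrix (Fin b) (Fin b) ℂ)
    (hΦ : IsCPTP Φ) (hdeg : Degradable Φ)
    (hfull : ∃ ψ : Fin a → ℂ, star ψ ⬝ᵥ ψ = 1 ∧
      (Φ (Matrix.vecMulVec ψ (star ψ))).rank = b) :
    (choi Φ).rank = b :=
  degradable_fullRank_choiRank_general Φ hdeg hfull
end

section
/- The set of anti-degradable CPT channels from M_{d_A} to M_{d_B} is convex: if Φ_0 and Φ_1 are anti-degradable and 0 ≤ p ≤ 1, then (1−p)Φ_0 + pΦ_1 is anti-degradable. -/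
/-! Stacking the Kraus families `√(1-p) • A₀` and `√p • A₁` gives a Kraus representation of
`(1-p) Φ₀ + p Φ₁` whose complementary channel has `(1-p) Φ₀ᶜ` and `p Φ₁ᶜ` as its diagonal blocks.
Applying the anti-degrading map `Λᵢ` to the `i`-th diagonal block and adding the results is again
CPTP (the flagged channel `Λ₀ ⊕ Λ₁` followed by the partial trace over the flag), and it sends the
complement to `(1-p) Φ₀ + p Φ₁`. -/

open Matrix Kronecker BigOperators ComplexOrder

section Choi

variable {ι κ m n : Type*}

def submatrixMap (f : ι → κ) : Matrix κ κ ℂ →ₗ[ℂ] Matrix ι ι ℂ where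
  toFun X := X.submatrix f f
  map_add' _ _ := rfl
  map_smul' _ _ := rfl

@[simp]
lemma submatrixMap_apply (f : ι → κ) (X : Matrix κ κ ℂ) : submatrixMap f X = X.submatrix f f :=
  rfl

lemma choi_add [Fintype n] [DecidableEq n] (Φ Ψ : Matrix n n ℂ →ₗ[ℂ] Matrix m m ℂ) :
    choi (Φ + Ψ) = choi Φ + choi Ψ :=
  rfl

lemma apply_apply_eq_sum_choi [Fintype n] [DecidableEq n]
    (Φ : Matrix n n ℂ →ₗ[ℂ] Matrix m m ℂ) (X : Matrix n n ℂ) (u v : m) :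
    Φ X u v = ∑ i, ∑ j, X i j * choi Φ (i, u) (j, v) := by
  have single_eq_smul (i j : n) : single i j (X i j) = X i j • single i j 1 := by
    rw [smul_single, smul_eq_mul, mul_one]
  conv_lhs => rw [matrix_eq_sum_single X]
  simp only [single_eq_smul, map_sum, map_smul, Matrix.sum_apply, Matrix.smul_apply, smul_eq_mul,
    choi, of_apply]

lemma choi_comp_submatrixMap [Fintype ι] [DecidableEq ι] [Fintype κ] [DecidableEq κ]
    [Fintype m] [DecidableEq m] (f : ι → κ) (Λ : Matrix ι ι ℂ →ₗ[ℂ] Matrix m m ℂ) :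
    choi (Λ ∘ₗ submatrixMap f) =
      (1 : Matrix (κ × m) (κ × m) ℂ).submatrix id (Prod.map f id) * choi Λ *
        ((1 : Matrix (κ × m) (κ × m) ℂ).submatrix id (Prod.map f id))ᴴ := by
  ext ⟨q, u⟩ ⟨q', v⟩
  rw [choi, of_apply, LinearMap.comp_apply, submatrixMap_apply, apply_apply_eq_sum_choi]
  simp only [Matrix.mul_apply, conjTranspose_apply, submatrix_apply, one_apply,
    Fintype.sum_prod_type, Finset.sum_mul]
  rw [Finset.sum_comm]
  refine Finset.sum_congr rfl fun i _ => ?_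
  rw [Finset.sum_comm]
  refine Finset.sum_congr rfl fun j _ => ?_
  by_cases hj : q = f j <;> by_cases hi : q' = f i <;>
    simp [Prod.ext_iff, hi, hj, apply_ite (starRingEnd ℂ)]

lemma posSemidef_choi_comp_submatrixMap [Fintype ι] [DecidableEq ι] [Fintype κ] [DecidableEq κ]
    [Fintype m] [DecidableEq m] {Λ : Matrix ι ι ℂ →ₗ[ℂ] Matrix m m ℂ} (h : (choi Λ).PosSemidef)
    (f : ι → κ) : (choi (Λ ∘ₗ submatrixMap f)).PosSemidef := by
  rw [choi_comp_submatrixMap]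
  exact h.mul_mul_conjTranspose_same _

end Choi

lemma trace_submatrix_castAdd_add_trace_submatrix_natAdd {R : Type*} [AddCommMonoid R]
    {e₀ e₁ : ℕ} (X : Matrix (Fin (e₀ + e₁)) (Fin (e₀ + e₁)) R) :
    (X.submatrix (Fin.castAdd e₁) (Fin.castAdd e₁)).trace +
      (X.submatrix (Fin.natAdd e₀) (Fin.natAdd e₀)).trace = X.trace :=
  (Fin.sum_univ_add fun i => X i i).symm

section Blocks

variable {m n : Type*} {e₀ e₁ : ℕ}

lemma IsCPTP.comp_castAdd_add_comp_natAdd [Fintype m] [DecidableEq m]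
    {Λ₀ : Matrix (Fin e₀) (Fin e₀) ℂ →ₗ[ℂ] Matrix m m ℂ}
    {Λ₁ : Matrix (Fin e₁) (Fin e₁) ℂ →ₗ[ℂ] Matrix m m ℂ} (h₀ : IsCPTP Λ₀) (h₁ : IsCPTP Λ₁) :
    IsCPTP (Λ₀ ∘ₗ submatrixMap (Fin.castAdd e₁) + Λ₁ ∘ₗ submatrixMap (Fin.natAdd e₀)) := by
  refine ⟨?_, fun X => ?_⟩
  · rw [choi_add]
    exact (posSemidef_choi_comp_submatrixMap h₀.1 _).add
      (posSemidef_choi_comp_submatrixMap h₁.1 _)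
  · simp only [LinearMap.add_apply, LinearMap.comp_apply, submatrixMap_apply, trace_add, h₀.2,
      h₁.2, trace_submatrix_castAdd_add_trace_submatrix_natAdd]

lemma submatrixMap_comp_complementMap {ι κ : Type*} [Fintype n] [Fintype m] [Fintype ι]
    [Fintype κ] (A : κ → Matrix m n ℂ) (f : ι → κ) :
    submatrixMap f ∘ₗ complementMap A = complementMap (A ∘ f) :=
  rfl

lemma complementMap_smul {ι : Type*} [Fintype n] [Fintype m] [Fintype ι] (c : ℂ)
    (A : ι → Matrix m n ℂ) : complementMap (c • A) = (star c * c) • complementMap A := by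
  ext ρ j k
  simp only [complementMap, LinearMap.coe_mk, AddHom.coe_mk, LinearMap.smul_apply, of_apply,
    Pi.smul_apply, conjTranspose_smul, Matrix.smul_mul, Matrix.mul_smul, smul_smul, trace_smul,
    Matrix.smul_apply, smul_eq_mul]

lemma IsKrausRep.append_smul [Fintype n] [DecidableEq n] [Fintype m]
    {A₀ : Fin e₀ → Matrix m n ℂ} {A₁ : Fin e₁ → Matrix m n ℂ}
    {Φ₀ Φ₁ : Matrix n n ℂ →ₗ[ℂ] Matrix m m ℂ} (h₀ : IsKrausRep A₀ Φ₀) (h₁ : IsKrausRep A₁ Φ₁)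
    {c₀ c₁ : ℂ} (hc : star c₀ * c₀ + star c₁ * c₁ = 1) :
    IsKrausRep (Fin.append (c₀ • A₀) (c₁ • A₁)) ((star c₀ * c₀) • Φ₀ + (star c₁ * c₁) • Φ₁) := by
  constructor
  · intro ρ
    simp only [Fin.sum_univ_add, Fin.append_left, Fin.append_right, Pi.smul_apply,
      conjTranspose_smul, Matrix.smul_mul, Matrix.mul_smul, smul_smul, ← Finset.smul_sum, ← h₀.1,
      ← h₁.1, LinearMap.add_apply, LinearMap.smul_apply, mul_comm (star _)]
  · simp only [Fin.sum_univ_add, Fin.append_left, Fin.append_right, Pi.smul_apply,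
      conjTranspose_smul, Matrix.smul_mul, Matrix.mul_smul, smul_smul, ← Finset.smul_sum, h₀.2,
      h₁.2, ← add_smul]
    rw [mul_comm c₀, mul_comm c₁, hc, one_smul]

theorem AntiDegradable.smul_add_smul [Fintype n] [DecidableEq n] [Fintype m] [DecidableEq m]
    {Φ₀ Φ₁ : Matrix n n ℂ →ₗ[ℂ] Matrix m m ℂ} (h₀ : AntiDegradable Φ₀) (h₁ : AntiDegradable Φ₁)
    {c₀ c₁ : ℂ} (hc : star c₀ * c₀ + star c₁ * c₁ = 1) :
    AntiDegradable ((star c₀ * c₀) • Φ₀ + (star c₁ * c₁) • Φ₁) := by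
  obtain ⟨e₀, A₀, hA₀, Λ₀, hΛ₀, rfl⟩ := h₀
  obtain ⟨e₁, A₁, hA₁, Λ₁, hΛ₁, rfl⟩ := h₁
  refine ⟨e₀ + e₁, _, hA₀.append_smul hA₁ hc, _, hΛ₀.comp_castAdd_add_comp_natAdd hΛ₁, ?_⟩
  have append_comp_castAdd : Fin.append (c₀ • A₀) (c₁ • A₁) ∘ Fin.castAdd e₁ = c₀ • A₀ :=
    funext (Fin.append_left _ _)
  have append_comp_natAdd : Fin.append (c₀ • A₀) (c₁ • A₁) ∘ Fin.natAdd e₀ = c₁ • A₁ :=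
    funext (Fin.append_right _ _)
  rw [LinearMap.add_comp, LinearMap.comp_assoc, LinearMap.comp_assoc,
    submatrixMap_comp_complementMap, submatrixMap_comp_complementMap, append_comp_castAdd,
    append_comp_natAdd, complementMap_smul, complementMap_smul, LinearMap.comp_smul,
    LinearMap.comp_smul]

end Blocks

theorem antiDegradable_convex_general {a b : ℕ}
    (Φ₀ Φ₁ : Matrix (Fin a) (Fin a) ℂ →ₗ[ℂ] Matrix (Fin b) (Fin b) ℂ)
    (h₀ : AntiDegradable Φ₀) (h₁ : AntiDegradable Φ₁)
    (p : ℝ) (hp0 : 0 ≤ p) (hp1 : p ≤ 1) :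
    AntiDegradable ((1 - (p : ℂ)) • Φ₀ + (p : ℂ) • Φ₁) := by
  have star_sqrt_mul_sqrt {t : ℝ} (ht : 0 ≤ t) : star (√t : ℂ) * (√t : ℂ) = t := by
    rw [Complex.star_def, Complex.conj_ofReal, ← Complex.ofReal_mul, Real.mul_self_sqrt ht]
  have hmix := h₀.smul_add_smul h₁ (c₀ := √(1 - p)) (c₁ := √p)
    (by rw [star_sqrt_mul_sqrt (by linarith), star_sqrt_mul_sqrt hp0]; push_cast; ring)
  rwa [star_sqrt_mul_sqrt (by linarith), star_sqrt_mul_sqrt hp0, Complex.ofReal_sub,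
    Complex.ofReal_one] at hmix

/-- the set of anti-degradable channels is convex. -/
theorem antiDegradable_convex {a b : ℕ}
    (Φ₀ Φ₁ : Matrix (Fin a) (Fin a) ℂ →ₗ[ℂ] Matrix (Fin b) (Fin b) ℂ)
    (h₀c : IsCPTP Φ₀) (h₁c : IsCPTP Φ₁)
    (h₀ : AntiDegradable Φ₀) (h₁ : AntiDegradable Φ₁)
    (p : ℝ) (hp0 : 0 ≤ p) (hp1 : p ≤ 1) :
    AntiDegradable ((1 - (p : ℂ)) • Φ₀ + (p : ℂ) • Φ₁) :=
  antiDegradable_convex_general Φ₀ Φ₁ h₀ h₁ p hp0 hp1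
end
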